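/- Let F be a family of subsets of the universe U = {1,...,n} and consider the digraph D with vertices {s, t} ∪ {u_j : j ∈ U} ∪ {v_i : S_i ∈ F}, arcs (s, v_i) for all i, arcs (v_i, u_j) whenever j ∈ S_i, arcs (u_j, t) for all j, and the arc (t, s). If F' ⊆ F is a set cover of U of size k, then D contains a subset of arcs of size k + 2n + 1 such that every pair of vertices from {u_1,...,u_n} is connected by directed paths (in both directions) using only these arcs. -/

import Mathlib

/-- Vertices of the digraph built from a Set Cover instance: a source `s`, a sink `t`,
element vertices `u j`, and set vertices `v i`. -/
inductive SCV (n m : ℕ) : Type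
  | s : SCV n m
  | t : SCV n m
  | u : Fin n → SCV n m
  | v : Fin m → SCV n m
deriving DecidableEq

/-- Arcs of the constructed digraph: `(s, v i)` for all `i`, `(v i, u j)` whenever
`j ∈ Sets i`, `(u j, t)` for all `j`, and `(t, s)`. -/
def Darc {n m : ℕ} (Sets : Fin m → Finset (Fin n)) : SCV n m → SCV n m → Prop :=
  fun x y => match x, y with
  | .s, .v _ => True
  | .v i, .u j => j ∈ Sets i
  | .u _, .t => True
  | .t, .s => True
  | _, _ => False

/-!
Given a cover `F'` and a choice `f j ∈ F'` of a set containing each element `j`, take the arcs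
`(s, v i)` for `i ∈ F'`, `(v (f j), u j)` and `(u j, t)` for every `j`, and `(t, s)`.
Every `u j` reaches every `u j'` along `u j → t → s → v (f j') → u j'`. Indexing the arcs by
`F' ⊕ Fin n ⊕ Fin n ⊕ Unit` injectively gives the count `k + 2n + 1`.
-/

namespace SCV

variable {n m : ℕ}

def coverArc (f : Fin n → Fin m) : Fin m ⊕ Fin n ⊕ Fin n ⊕ Unit → SCV n m × SCV n m
  | .inl i => (s, v i)
  | .inr (.inl j) => (v (f j), u j)
  | .inr (.inr (.inl j)) => (u j, t)
  | .inr (.inr (.inr _)) => (t, s)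

theorem coverArc_injective (f : Fin n → Fin m) : Function.Injective (coverArc f) := by
  rintro (i | j | j | ⟨⟩) (i' | j' | j' | ⟨⟩) h <;> simp_all [coverArc]

def coverArcs (F' : Finset (Fin m)) (f : Fin n → Fin m) : Finset (SCV n m × SCV n m) :=
  (F'.disjSum (Finset.univ.disjSum Finset.univ)).image (coverArc f)

theorem coverArc_mem_coverArcs {F' : Finset (Fin m)} {f : Fin n → Fin m}
    {a : Fin m ⊕ Fin n ⊕ Fin n ⊕ Unit} (ha : a ∈ F'.disjSum (Finset.univ.disjSum Finset.univ)) :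
    coverArc f a ∈ coverArcs F' f :=
  Finset.mem_image_of_mem _ ha

theorem darc_of_mem_coverArcs {Sets : Fin m → Finset (Fin n)} {F' : Finset (Fin m)}
    {f : Fin n → Fin m} (hf : ∀ j, j ∈ Sets (f j)) {e : SCV n m × SCV n m}
    (he : e ∈ coverArcs F' f) : Darc Sets e.1 e.2 := by
  obtain ⟨a, -, rfl⟩ := Finset.mem_image.mp he
  rcases a with i | j | j | ⟨⟩
  · trivial
  · exact hf j
  · trivial
  · trivial

theorem card_coverArcs (F' : Finset (Fin m)) (f : Fin n → Fin m) :
    (coverArcs F' f).card = F'.card + 2 * n + 1 := by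
  rw [coverArcs, Finset.card_image_of_injective _ (coverArc_injective f)]
  simp only [Finset.card_disjSum, Finset.card_univ, Fintype.card_sum, Fintype.card_fin,
    Fintype.card_unit]
  omega

theorem reflTransGen_coverArcs {F' : Finset (Fin m)} {f : Fin n → Fin m}
    (hfF : ∀ j, f j ∈ F') (j j' : Fin n) :
    Relation.ReflTransGen (fun x y => (x, y) ∈ coverArcs F' f) (u j) (u j') := by
  have hut : (u j, t) ∈ coverArcs F' f :=
    coverArc_mem_coverArcs (a := .inr (.inr (.inl j))) (by simp)
  have hts : (t, s) ∈ coverArcs F' f :=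
    coverArc_mem_coverArcs (a := .inr (.inr (.inr ()))) (by simp)
  have hsv : (s, v (f j')) ∈ coverArcs F' f :=
    coverArc_mem_coverArcs (a := .inl (f j')) (by simpa using hfF j')
  have hvu : (v (f j'), u j') ∈ coverArcs F' f :=
    coverArc_mem_coverArcs (a := .inr (.inl j')) (by simp)
  exact .tail (.tail (.tail (.single hut) hts) hsv) hvu

end SCV

/-- If `F'` is a set cover of size `k`, then the constructed digraph contains an arc set of
size `k + 2n + 1` strongly connecting all element vertices `u j` to each other. -/
theorem stmt_13 {n m : ℕ} (Sets : Fin m → Finset (Fin n)) (F' : Finset (Fin m)) (k : ℕ)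
    (hcover : ∀ j : Fin n, ∃ i ∈ F', j ∈ Sets i) (hk : F'.card = k) :
    ∃ A' : Finset (SCV n m × SCV n m),
      A'.card = k + 2 * n + 1 ∧
      (∀ e ∈ A', Darc Sets e.1 e.2) ∧
      ∀ j j' : Fin n,
        Relation.ReflTransGen (fun x y => (x, y) ∈ A') (SCV.u j) (SCV.u j') := by
  choose f hfF hfS using hcover
  exact ⟨SCV.coverArcs F' f, by rw [SCV.card_coverArcs, hk],
    fun _ => SCV.darc_of_mem_coverArcs hfS, SCV.reflTransGen_coverArcs hfF⟩
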